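/- For every complex μ with Re(μ) < 0 and every complex z, the Hermite function satisfies H_μ(z) = (1/Γ(-μ)) · ∫₀^∞ e^{-u² - 2zu} u^{-(μ+1)} du. -/

import Mathlib

open MeasureTheory Real Complex Set
open scoped ENNReal NNReal

/-- Kummer's confluent hypergeometric function `Φ(a,b,z) = ₁F₁(a;b;z)`. -/
noncomputable def kummerPhi (a b z : ℂ) : ℂ :=
  ∑' n : ℕ, ((ascPochhammer ℂ n).eval a / (ascPochhammer ℂ n).eval b) * z ^ n / n.factorial

/-- The Hermite function `H_μ` of complex degree `μ`. -/
noncomputable def hermiteF (μ z : ℂ) : ℂ :=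
  (2 : ℂ) ^ μ * Complex.Gamma (1 / 2) / Complex.Gamma ((1 - μ) / 2) *
      kummerPhi (-μ / 2) (1 / 2) (z ^ 2) +
    z * ((2 : ℂ) ^ μ * Complex.Gamma (-(1 : ℂ) / 2) / Complex.Gamma (-μ / 2)) *
      kummerPhi ((1 - μ) / 2) (3 / 2) (z ^ 2)



lemma sq_cpow {x : ℝ} (hx : 0 < x) (c : ℂ) : ((x : ℂ) ^ 2) ^ c = (x : ℂ) ^ (2 * c) := by
  have hx2 : ((x : ℂ) ^ 2) = ((x ^ 2 : ℝ) : ℂ) := by push_cast; ring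
  have h1 : ((x:ℂ)) ≠ 0 := by exact_mod_cast hx.ne'
  have h2 : ((x ^ 2 : ℝ) : ℂ) ≠ 0 := by rw [← hx2]; exact pow_ne_zero _ h1
  rw [hx2, Complex.cpow_def_of_ne_zero h2, Complex.cpow_def_of_ne_zero h1]
  congr 1
  rw [← Complex.ofReal_log (sq_nonneg x), ← Complex.ofReal_log hx.le]
  · push_cast [Real.log_pow]; ring

lemma gauss_mellin {s : ℂ} (hs : 0 < s.re) :
    ∫ u in Ioi (0:ℝ), Complex.exp (-(u:ℂ)^2) * (u:ℂ) ^ (s - 1) = Complex.Gamma (s/2) / 2 := by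
  have hs2 : 0 < (s/2).re := by
    rw [Complex.div_re]; simp; positivity
  have key := integral_comp_rpow_Ioi (fun y : ℝ => Complex.exp (-(y:ℂ)) * (y:ℂ) ^ (s/2 - 1))
    (two_ne_zero (α := ℝ))
  have hG : Complex.Gamma (s/2) = ∫ y in Ioi (0:ℝ), Complex.exp (-(y:ℂ)) * (y:ℂ) ^ (s/2 - 1) := by
    rw [Complex.Gamma_eq_integral hs2, Complex.GammaIntegral]
    refine setIntegral_congr_fun measurableSet_Ioi (fun x hx => ?_)
    rw [Complex.ofReal_exp, Complex.ofReal_neg]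
  have key2 : ∫ x in Ioi (0:ℝ), (2:ℂ) * (Complex.exp (-(x:ℂ)^2) * (x:ℂ) ^ (s - 1))
      = Complex.Gamma (s/2) := by
    rw [hG, ← key]
    refine setIntegral_congr_fun measurableSet_Ioi (fun x hx => ?_)
    have hx : (0:ℝ) < x := hx
    have h1 : ((x:ℂ)) ≠ 0 := by exact_mod_cast hx.ne'
    have hr : ((x ^ (2:ℝ) : ℝ) : ℂ) = (x:ℂ)^2 := by
      rw [show ((2:ℝ)) = ((2:ℕ):ℝ) by norm_num, Real.rpow_natCast]; push_cast; ring
    rw [hr, sq_cpow hx, Complex.real_smul]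
    have hxp : (x:ℝ) ^ ((2:ℝ)-1) = x := by
      rw [show ((2:ℝ)-1) = 1 by norm_num, Real.rpow_one]
    rw [hxp]
    have hcadd : (x:ℂ) ^ (s - 1) = (x:ℂ) ^ (2 * (s/2 - 1)) * (x:ℂ) := by
      rw [show (s - 1) = 2 * (s/2-1) + 1 by ring, Complex.cpow_add _ _ h1, Complex.cpow_one]
    rw [hcadd, show |(2:ℝ)| = 2 by norm_num]
    push_cast
    ring
  rw [MeasureTheory.integral_const_mul] at key2
  rw [← key2]; ring

lemma gamma_poch (a : ℂ) (ha : 0 < a.re) (k : ℕ) :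
    Complex.Gamma (a + k) = (ascPochhammer ℂ k).eval a * Complex.Gamma a := by
  induction k with
  | zero => simp
  | succ n ih =>
    have hne : a + n ≠ 0 := by
      have hp : 0 < (a + (n:ℂ)).re := by
        simp only [Complex.add_re, Complex.natCast_re]
        have : (0:ℝ) ≤ (n:ℝ) := Nat.cast_nonneg n
        linarith
      intro h0
      rw [h0] at hp
      simp at hp
    have : a + ((n+1 : ℕ):ℂ) = (a + n) + 1 := by push_cast; ring
    rw [this, Complex.Gamma_add_one _ hne, ih, ascPochhammer_succ_right]
    simp [Polynomial.eval_mul]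
    ring

lemma poch_half (k : ℕ) :
    (ascPochhammer ℂ k).eval (1/2) = (2*k).factorial / ((4:ℂ)^k * k.factorial) := by
  induction k with
  | zero => simp
  | succ n ih =>
    rw [ascPochhammer_succ_right]
    simp only [Polynomial.eval_mul, Polynomial.eval_add, Polynomial.eval_X,
      Polynomial.eval_natCast, ih]
    have h1 : (2*(n+1)).factorial = (2*n+2) * ((2*n+1) * (2*n).factorial) := by
      rw [show 2*(n+1) = (2*n+1)+1 by ring, Nat.factorial_succ, Nat.factorial_succ]
    have h2 : (n+1).factorial = (n+1) * n.factorial := Nat.factorial_succ n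
    rw [h1, h2]
    have hf1 : ((2*n).factorial : ℂ) ≠ 0 := by exact_mod_cast (2*n).factorial_ne_zero
    have hf2 : ((n).factorial : ℂ) ≠ 0 := by exact_mod_cast n.factorial_ne_zero
    have h4 : ((4:ℂ))^n ≠ 0 := by norm_num
    have hn1 : ((n:ℂ)+1) ≠ 0 := by exact_mod_cast (Nat.cast_ne_zero (R:=ℂ)).mpr (Nat.succ_ne_zero n)
    push_cast
    field_simp
    ring

lemma poch_threehalf (k : ℕ) :
    (ascPochhammer ℂ k).eval (3/2) = (2*k+1).factorial / ((4:ℂ)^k * k.factorial) := by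
  induction k with
  | zero => simp
  | succ n ih =>
    rw [ascPochhammer_succ_right]
    simp only [Polynomial.eval_mul, Polynomial.eval_add, Polynomial.eval_X,
      Polynomial.eval_natCast, ih]
    have h1 : (2*(n+1)+1).factorial = (2*n+3) * ((2*n+2) * (2*n+1).factorial) := by
      rw [show 2*(n+1)+1 = (2*n+2)+1 by ring, Nat.factorial_succ, Nat.factorial_succ]
    have h2 : (n+1).factorial = (n+1) * n.factorial := Nat.factorial_succ n
    rw [h1, h2]
    have hf1 : ((2*n+1).factorial : ℂ) ≠ 0 := by exact_mod_cast (2*n+1).factorial_ne_zero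
    have hf2 : ((n).factorial : ℂ) ≠ 0 := by exact_mod_cast n.factorial_ne_zero
    have h4 : ((4:ℂ))^n ≠ 0 := by norm_num
    have hn1 : ((n:ℂ)+1) ≠ 0 := by exact_mod_cast (Nat.cast_ne_zero (R:=ℂ)).mpr (Nat.succ_ne_zero n)
    push_cast
    field_simp
    ring

lemma gamma_pos_ne_zero {s : ℂ} (hs : 0 < s.re) : Complex.Gamma s ≠ 0 := by
  refine Complex.Gamma_ne_zero (fun m h => ?_)
  rw [h] at hs
  simp only [Complex.neg_re, Complex.natCast_re] at hs
  have : (0:ℝ) ≤ (m:ℝ) := Nat.cast_nonneg m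
  linarith

lemma gamma_half_sqrt : Complex.Gamma (1/2) = ((Real.sqrt π : ℝ) : ℂ) := by
  rw [Complex.Gamma_one_half_eq, show ((1:ℂ)/2) = (((1/2:ℝ)):ℂ) by norm_num,
    ← Complex.ofReal_cpow Real.pi_pos.le, Real.sqrt_eq_rpow]

lemma gamma_neg_half : Complex.Gamma (-(1:ℂ)/2) = -2 * ((Real.sqrt π : ℝ) : ℂ) := by
  have h := Complex.Gamma_add_one (-(1:ℂ)/2) (by norm_num)
  have h2 : (-(1:ℂ)/2) + 1 = 1/2 := by ring
  rw [h2, gamma_half_sqrt] at h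
  linear_combination 2 * h

lemma duplication (μ : ℂ) :
    Complex.Gamma (-μ/2) * Complex.Gamma ((1-μ)/2)
      = Complex.Gamma (-μ) * (2 * (2:ℂ)^μ) * ((Real.sqrt π : ℝ) : ℂ) := by
  have h := Complex.Gamma_mul_Gamma_add_half (-μ/2)
  have e1 : -μ/2 + 1/2 = (1-μ)/2 := by ring
  have e2 : 2 * (-μ/2) = -μ := by ring
  have e3 : (1:ℂ) - 2 * (-μ/2) = 1 + μ := by ring
  rw [e1, e2] at h
  rw [show (1:ℂ) - -μ = 1 + μ from by ring] at h
  rw [h, Complex.cpow_add _ _ two_ne_zero, Complex.cpow_one]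

lemma two_cpow_ne (μ : ℂ) : (2:ℂ)^μ ≠ 0 := by
  rw [Complex.cpow_def_of_ne_zero two_ne_zero]
  exact Complex.exp_ne_zero _

lemma sqrt_pi_ne : ((Real.sqrt π : ℝ) : ℂ) ≠ 0 :=
  Complex.ofReal_ne_zero.mpr (Real.sqrt_ne_zero'.mpr Real.pi_pos)

section terms
variable {μ : ℂ} (hμ : μ.re < 0)

lemma re_neg_mu_half (hμ : μ.re < 0) : 0 < (-μ/2).re := by
  have : (-μ/2).re = -μ.re/2 := by simp [Complex.div_re, Complex.normSq]
  rw [this]; linarith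

lemma re_one_sub_mu_half (hμ : μ.re < 0) : 0 < ((1-μ)/2).re := by
  have : ((1-μ)/2).re = (1-μ.re)/2 := by simp [Complex.div_re, Complex.normSq, Complex.sub_re]
  rw [this]; linarith

lemma gamma_sub_mu_sub (hμ : μ.re < 0) :
    Complex.Gamma (-μ/2) = Complex.Gamma (-μ) * (2 * (2:ℂ)^μ) * ((Real.sqrt π : ℝ) : ℂ)
      / Complex.Gamma ((1-μ)/2) := by
  rw [eq_div_iff (gamma_pos_ne_zero (re_one_sub_mu_half hμ))]
  exact duplication μ

lemma even_term (z : ℂ) (hμ : μ.re < 0) (k : ℕ) :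
    1/Complex.Gamma (-μ) * ((-2*z)^(2*k) / ((2*k).factorial : ℂ)
        * (Complex.Gamma ((((2*k : ℕ) : ℂ) - μ)/2)/2))
    = (2:ℂ)^μ * Complex.Gamma (1/2) / Complex.Gamma ((1-μ)/2) *
      ((ascPochhammer ℂ k).eval (-μ/2) / (ascPochhammer ℂ k).eval (1/2)
        * (z^2)^k / (k.factorial : ℂ)) := by
  have hg : Complex.Gamma ((((2*k : ℕ) : ℂ) - μ)/2)
      = (ascPochhammer ℂ k).eval (-μ/2) * Complex.Gamma (-μ/2) := by
    rw [show ((((2*k : ℕ) : ℂ) - μ)/2) = -μ/2 + k by push_cast; ring]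
    exact gamma_poch _ (re_neg_mu_half hμ) k
  have hpow : (-2*z)^(2*k) = 4^k * (z^2)^k := by
    rw [pow_mul, show (-2*z)^2 = 4 * z^2 by ring, mul_pow]
  rw [hg, hpow, poch_half, gamma_half_sqrt, gamma_sub_mu_sub hμ]
  have h1 : Complex.Gamma (-μ) ≠ 0 := gamma_pos_ne_zero (by simp only [Complex.neg_re]; linarith)
  have h2 : Complex.Gamma ((1-μ)/2) ≠ 0 := gamma_pos_ne_zero (re_one_sub_mu_half hμ)
  have h3 : ((2*k).factorial : ℂ) ≠ 0 := by exact_mod_cast (2*k).factorial_ne_zero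
  have h4 : ((k).factorial : ℂ) ≠ 0 := by exact_mod_cast k.factorial_ne_zero
  have h5 : ((4:ℂ))^k ≠ 0 := by norm_num
  have h6 : (2:ℂ)^μ ≠ 0 := two_cpow_ne μ
  have h7 := sqrt_pi_ne
  set G0 := Complex.Gamma (-μ) with hG0
  set G1 := Complex.Gamma ((1-μ)/2) with hG1
  set P := (ascPochhammer ℂ k).eval (-μ/2) with hPdef
  set S := ((Real.sqrt π : ℝ) : ℂ) with hS
  set T := (2:ℂ)^μ with hT
  set F1 := (((2*k).factorial : ℕ) : ℂ) with hF1
  set F2 := ((k.factorial : ℕ) : ℂ) with hF2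
  set Q := ((4:ℂ))^k with hQ
  set Z := (z^2)^k with hZ
  field_simp

lemma odd_term (z : ℂ) (hμ : μ.re < 0) (k : ℕ) :
    1/Complex.Gamma (-μ) * ((-2*z)^(2*k+1) / ((2*k+1).factorial : ℂ)
        * (Complex.Gamma ((((2*k+1 : ℕ) : ℂ) - μ)/2)/2))
    = z * ((2:ℂ)^μ * Complex.Gamma (-(1:ℂ)/2) / Complex.Gamma (-μ/2)) *
      ((ascPochhammer ℂ k).eval ((1-μ)/2) / (ascPochhammer ℂ k).eval (3/2)
        * (z^2)^k / (k.factorial : ℂ)) := by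
  have hg : Complex.Gamma ((((2*k+1 : ℕ) : ℂ) - μ)/2)
      = (ascPochhammer ℂ k).eval ((1-μ)/2) * Complex.Gamma ((1-μ)/2) := by
    rw [show ((((2*k+1 : ℕ) : ℂ) - μ)/2) = (1-μ)/2 + k by push_cast; ring]
    exact gamma_poch _ (re_one_sub_mu_half hμ) k
  have hpow : (-2*z)^(2*k+1) = (-2*z) * (4^k * (z^2)^k) := by
    rw [pow_succ, pow_mul, show (-2*z)^2 = 4 * z^2 by ring, mul_pow]; ring
  rw [hg, hpow, poch_threehalf, gamma_neg_half, gamma_sub_mu_sub hμ]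
  have h1 : Complex.Gamma (-μ) ≠ 0 := gamma_pos_ne_zero (by simp only [Complex.neg_re]; linarith)
  have h2 : Complex.Gamma ((1-μ)/2) ≠ 0 := gamma_pos_ne_zero (re_one_sub_mu_half hμ)
  have h3 : (((2*k+1).factorial : ℕ) : ℂ) ≠ 0 := by exact_mod_cast (2*k+1).factorial_ne_zero
  have h4 : ((k).factorial : ℂ) ≠ 0 := by exact_mod_cast k.factorial_ne_zero
  have h5 : ((4:ℂ))^k ≠ 0 := by norm_num
  have h6 : (2:ℂ)^μ ≠ 0 := two_cpow_ne μ
  have h7 := sqrt_pi_ne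
  set G0 := Complex.Gamma (-μ) with hG0
  set G1 := Complex.Gamma ((1-μ)/2) with hG1
  set P := (ascPochhammer ℂ k).eval ((1-μ)/2) with hPdef
  set S := ((Real.sqrt π : ℝ) : ℂ) with hS
  set T := (2:ℂ)^μ with hT
  set F1 := (((2*k+1).factorial : ℕ) : ℂ) with hF1
  set F2 := ((k.factorial : ℕ) : ℂ) with hF2
  set Q := ((4:ℂ))^k with hQ
  set Z := (z^2)^k with hZ
  field_simp

end terms

section analytic
variable (μ z : ℂ)

private noncomputable def ff (μ z : ℂ) (n : ℕ) (u : ℝ) : ℂ :=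
  Complex.exp (-(u:ℂ)^2) * ((-2*z*u)^n / (n.factorial : ℂ)) * (u:ℂ)^(-(μ+1))

lemma ff_meas (n : ℕ) :
    AEStronglyMeasurable (ff μ z n) (volume.restrict (Set.Ioi (0:ℝ))) := by
  apply ContinuousOn.aestronglyMeasurable ?_ measurableSet_Ioi
  apply ContinuousOn.mul
  · apply Continuous.continuousOn
    continuity
  · intro x hx
    have hx : (0:ℝ) < x := hx
    apply ContinuousAt.continuousWithinAt
    have h1 : ContinuousAt (fun w : ℂ => w ^ (-(μ+1))) ((x:ℝ):ℂ) :=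
      continuousAt_cpow_const (Or.inl (by simpa using hx))
    exact h1.comp Complex.continuous_ofReal.continuousAt

lemma ff_norm (n : ℕ) {u : ℝ} (hu : 0 < u) :
    ‖ff μ z n u‖ = Real.exp (-u^2) * ((2*‖z‖*u)^n / (n.factorial : ℝ))
      * u ^ ((-(μ+1)).re) := by
  unfold ff
  rw [norm_mul, norm_mul]
  congr 1
  · congr 1
    · rw [show -(u:ℂ)^2 = ((-u^2 : ℝ) : ℂ) by push_cast; ring,
        Complex.norm_exp]
      rw [Complex.ofReal_re]
    · rw [norm_div, norm_pow]
      simp only [norm_mul, Complex.norm_real, Real.norm_eq_abs, Complex.norm_natCast]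
      rw [abs_of_pos hu, show ‖(-2:ℂ)‖ = 2 by simp]
  · rw [Complex.norm_cpow_eq_rpow_re_of_pos hu]

end analytic

lemma ff_norm_summable (μ z : ℂ) {u : ℝ} (hu : 0 < u) :
    Summable (fun n => ‖ff μ z n u‖) := by
  apply Summable.congr
    (f := fun n => Real.exp (-u^2) * u ^ ((-(μ+1)).re) * ((2*‖z‖*u)^n / (n.factorial : ℝ)))
  · exact ((Real.summable_pow_div_factorial (2*‖z‖*u)).mul_left _)
  · intro n
    rw [ff_norm μ z n hu]
    ring

lemma ff_tsum_norm (μ z : ℂ) {u : ℝ} (hu : 0 < u) :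
    ∑' n, ‖ff μ z n u‖
      = Real.exp (-u^2) * Real.exp (2*‖z‖*u) * u ^ ((-(μ+1)).re) := by
  have h1 : ∀ n, ‖ff μ z n u‖ = (Real.exp (-u^2) * u ^ ((-(μ+1)).re))
      * ((2*‖z‖*u)^n / (n.factorial : ℝ)) := by
    intro n; rw [ff_norm μ z n hu]; ring
  rw [tsum_congr h1, tsum_mul_left]
  rw [Real.exp_eq_exp_ℝ, NormedSpace.exp_eq_tsum_div]
  ring

lemma ff_tsum (μ z : ℂ) (u : ℝ) (hu : 0 < u) :
    ∑' n, ff μ z n u = Complex.exp (-(u:ℂ)^2 - 2*z*u) * (u:ℂ)^(-(μ+1)) := by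
  have h1 : ∀ n, ff μ z n u
      = (Complex.exp (-(u:ℂ)^2) * (u:ℂ)^(-(μ+1))) * ((-2*z*u)^n / (n.factorial : ℂ)) := by
    intro n; unfold ff; ring
  rw [tsum_congr h1, tsum_mul_left]
  have h2 : (∑' n : ℕ, (-2*z*u)^n / (n.factorial : ℂ)) = Complex.exp (-2*z*u) := by
    rw [Complex.exp_eq_exp_ℂ, NormedSpace.exp_eq_tsum_div]
  rw [h2, show -(u:ℂ)^2 - 2*z*u = -(u:ℂ)^2 + (-2*z*u) by ring, Complex.exp_add]
  ring

lemma majorant_integrable (μ z : ℂ) (hμ : μ.re < 0) : IntegrableOn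
    (fun u : ℝ => Real.exp (-u^2) * Real.exp (2*‖z‖*u) * u ^ ((-(μ+1)).re))
    (Set.Ioi (0:ℝ)) := by
  have hre : (-(μ+1)).re = (-μ.re) - 1 := by simp [Complex.add_re]; ring
  set c := 2*‖z‖ with hc
  have hc0 : 0 ≤ c := by positivity
  set M := Real.exp ((c+1)^2/4) with hM
  have hμ0 : 0 < -μ.re := by linarith
  have base : IntegrableOn (fun u : ℝ => M * (Real.exp (-u) * u ^ ((-μ.re) - 1)))
        (Set.Ioi (0:ℝ)) := (Real.GammaIntegral_convergent hμ0).const_mul M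
  apply Integrable.mono base
  · apply ContinuousOn.aestronglyMeasurable ?_ measurableSet_Ioi
    apply ContinuousOn.mul
    · exact (Continuous.mul (by continuity) (by continuity)).continuousOn
    · intro x hx
      exact (Real.continuousAt_rpow_const x _ (Or.inl (ne_of_gt hx))).continuousWithinAt
  · rw [ae_restrict_iff' measurableSet_Ioi]
    apply Filter.Eventually.of_forall
    intro u hu
    have hu : (0:ℝ) < u := hu
    rw [Real.norm_eq_abs, Real.norm_eq_abs, _root_.abs_of_nonneg (by positivity),
      _root_.abs_of_nonneg (by positivity), hre]
    have key : Real.exp (-u^2) * Real.exp (c*u) ≤ M * Real.exp (-u) := by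
      rw [← Real.exp_add, hM, ← Real.exp_add]
      apply Real.exp_le_exp.mpr
      nlinarith [sq_nonneg (u - (c+1)/2)]
    calc Real.exp (-u^2) * Real.exp (c*u) * u ^ ((-μ.re) - 1)
        ≤ (M * Real.exp (-u)) * u ^ ((-μ.re) - 1) := by
          apply mul_le_mul_of_nonneg_right key (by positivity)
      _ = M * (Real.exp (-u) * u ^ ((-μ.re) - 1)) := by ring

lemma ff_lintegral_ne_top (μ z : ℂ) (hμ : μ.re < 0) :
    ∑' n : ℕ, ∫⁻ u in Set.Ioi (0:ℝ), ‖ff μ z n u‖₊ ≠ ⊤ := by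
  rw [← (lintegral_tsum (fun n => (ff_meas μ z n).enorm) : ∫⁻ u in Set.Ioi (0:ℝ), ∑' n : ℕ,
    (‖ff μ z n u‖₊ : ℝ≥0∞) = ∑' n : ℕ, ∫⁻ u in Set.Ioi (0:ℝ), (‖ff μ z n u‖₊ : ℝ≥0∞))]
  have hGfin : (∫⁻ u in Set.Ioi (0:ℝ),
      ↑‖Real.exp (-u^2) * Real.exp (2*‖z‖*u) * u ^ ((-(μ+1)).re)‖₊) < ⊤ :=
    (majorant_integrable μ z hμ).hasFiniteIntegral
  apply ne_top_of_le_ne_top hGfin.ne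
  apply lintegral_mono_ae
  rw [ae_restrict_iff' measurableSet_Ioi]
  apply Filter.Eventually.of_forall
  intro u hu
  have hu : (0:ℝ) < u := hu
  have h1 : (∑' n : ℕ, (‖ff μ z n u‖₊ : ℝ≥0∞))
      = ENNReal.ofReal (∑' n : ℕ, ‖ff μ z n u‖) := by
    rw [ENNReal.ofReal_tsum_of_nonneg (fun n => norm_nonneg _) (ff_norm_summable μ z hu)]
    exact tsum_congr (fun n => (ofReal_norm_eq_enorm _).symm)
  rw [h1, ff_tsum_norm μ z hu]
  exact Real.ofReal_le_enorm _

lemma ff_integral (μ z : ℂ) (hμ : μ.re < 0) (n : ℕ) :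
    ∫ u in Set.Ioi (0:ℝ), ff μ z n u
      = (-2*z)^n / (n.factorial : ℂ) * (Complex.Gamma (((n:ℂ) - μ)/2)/2) := by
  have hcong : ∀ u ∈ Set.Ioi (0:ℝ), ff μ z n u
      = ((-2*z)^n / (n.factorial : ℂ)) *
          (Complex.exp (-(u:ℂ)^2) * (u:ℂ)^(((n:ℂ) - μ) - 1)) := by
    intro u hu
    have hu : (0:ℝ) < u := hu
    have hne : ((u:ℝ):ℂ) ≠ 0 := by exact_mod_cast hu.ne'
    unfold ff
    rw [mul_pow, show (((n:ℂ) - μ) - 1) = (n:ℂ) + (-(μ+1)) by ring,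
      Complex.cpow_add _ _ hne, Complex.cpow_natCast]
    ring
  rw [setIntegral_congr_fun measurableSet_Ioi hcong, MeasureTheory.integral_const_mul,
    gauss_mellin (show 0 < ((n:ℂ) - μ).re by
      simp only [Complex.sub_re, Complex.natCast_re]
      have : (0:ℝ) ≤ (n:ℝ) := Nat.cast_nonneg n
      linarith)]

lemma ff_integral_summable (μ z : ℂ) (hμ : μ.re < 0) :
    Summable (fun n : ℕ => ∫ u in Set.Ioi (0:ℝ), ff μ z n u) := by
  have h := ENNReal.summable_toReal (ff_lintegral_ne_top μ z hμ)
  apply Summable.of_norm_bounded h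
  intro n
  calc ‖∫ u in Set.Ioi (0:ℝ), ff μ z n u‖
      ≤ (∫⁻ u in Set.Ioi (0:ℝ), ENNReal.ofReal ‖ff μ z n u‖).toReal :=
        norm_integral_le_lintegral_norm _
    _ = (∫⁻ u in Set.Ioi (0:ℝ), (‖ff μ z n u‖₊ : ℝ≥0∞)).toReal := by
        congr 1
        exact lintegral_congr (fun a => ofReal_norm_eq_enorm _)

lemma integral_eq_tsum (μ z : ℂ) (hμ : μ.re < 0) :
    (∫ u in Set.Ioi (0:ℝ), Complex.exp (-(u:ℂ)^2 - 2*z*u) * (u:ℂ)^(-(μ+1)))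
      = ∑' n : ℕ, ((-2*z)^n / (n.factorial : ℂ) * (Complex.Gamma (((n:ℂ) - μ)/2)/2)) := by
  rw [show (∫ u in Set.Ioi (0:ℝ), Complex.exp (-(u:ℂ)^2 - 2*z*u) * (u:ℂ)^(-(μ+1)))
      = ∫ u in Set.Ioi (0:ℝ), ∑' n : ℕ, ff μ z n u from
    setIntegral_congr_fun measurableSet_Ioi (fun u hu => (ff_tsum μ z u hu).symm)]
  rw [MeasureTheory.integral_tsum (fun n => ff_meas μ z n) (ff_lintegral_ne_top μ z hμ)]
  exact tsum_congr (ff_integral μ z hμ)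

set_option maxHeartbeats 1600000 in
/-- integral representation of the Hermite function for
negative real part of the degree. -/
theorem hermiteF_integral_repr_neg (μ z : ℂ) (hμ : μ.re < 0) :
    hermiteF μ z =
      1 / Complex.Gamma (-μ) *
        ∫ u in Set.Ioi (0 : ℝ),
          Complex.exp (-(u : ℂ) ^ 2 - 2 * z * u) * (u : ℂ) ^ (-(μ + 1)) := by
  rw [integral_eq_tsum μ z hμ, ← tsum_mul_left]
  have hs : Summable (fun n : ℕ => 1 / Complex.Gamma (-μ) *
      ((-2*z)^n / (n.factorial : ℂ) * (Complex.Gamma (((n:ℂ) - μ)/2)/2))) := by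
    refine ((ff_integral_summable μ z hμ).mul_left (1 / Complex.Gamma (-μ))).congr (fun n => ?_)
    rw [ff_integral μ z hμ n]
  have he : Summable (fun k : ℕ => 1 / Complex.Gamma (-μ) *
      ((-2*z)^(2*k) / ((2*k).factorial : ℂ) * (Complex.Gamma ((((2*k:ℕ):ℂ) - μ)/2)/2))) :=
    hs.comp_injective (fun a b h => by omega)
  have ho : Summable (fun k : ℕ => 1 / Complex.Gamma (-μ) *
      ((-2*z)^(2*k+1) / ((2*k+1).factorial : ℂ) * (Complex.Gamma ((((2*k+1:ℕ):ℂ) - μ)/2)/2))) :=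
    hs.comp_injective (fun a b h => by omega)
  rw [← tsum_even_add_odd he ho]
  unfold hermiteF kummerPhi
  congr 1
  · rw [tsum_congr (fun k => even_term z hμ k), tsum_mul_left]
  · rw [tsum_congr (fun k => odd_term z hμ k), tsum_mul_left]
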